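/- For every integer m ≥ 1 and every nonzero Schwartz function σ on ℝ, there exists a Schwartz function ρ on ℝ whose Fourier transform ρ^♯ vanishes on a neighborhood of 0 and which is admissible with normalization 1, i.e. ⟪σ,ρ⟫ := (2π)^{m−1} ∫_ℝ σ^♯(ω)·conj(ρ^♯(ω))·|ω|^{−m} dω = 1. -/

import Mathlib

/-!
Pick `ξ₀ ≠ 0` with `𝓕 σ ξ₀ ≠ 0` and a bump function `χ` around `ξ₀` whose support avoids `0`.
The Schwartz function `ρ` with `𝓕 ρ = χ • 𝓕 σ` has `ρ^♯ = (𝓕 ρ)(· / 2π)` vanishing near `0`, and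
the substitution `ω = 2πξ` turns its pairing with `σ` into `2π ∫ χ ‖𝓕 σ‖² |2πξ|^(-m)`, which is
positive: `χ` removes the singularity of the weight at `0`. The pairing is conjugate-linear in
`ρ`, so a scalar multiple of `ρ` is normalized.
-/

open MeasureTheory Complex

/-- Fourier transform in the bias variable: `φ^♯(ω) = ∫ φ(b) e^{-iωb} db`. -/
noncomputable def biasFourier (φ : ℝ → ℂ) (ω : ℝ) : ℂ :=
  ∫ b : ℝ, φ b * Complex.exp (-Complex.I * ω * b)

open scoped FourierTransform
open Metric Topology

theorem Continuous.exists_ne_and_apply_ne_zero {X E : Type*} [TopologicalSpace X]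
    [TopologicalSpace E] [Zero E] [T1Space E] {f : X → E} (hf : Continuous f) (h : f ≠ 0)
    (x₀ : X) [Filter.NeBot (𝓝[≠] x₀)] : ∃ x ≠ x₀, f x ≠ 0 := by
  obtain ⟨x, hfx, hx⟩ := (dense_compl_singleton x₀).inter_open_nonempty _ hf.isOpen_support
    (Function.support_nonempty_iff.mpr h)
  exact ⟨x, hx, hfx⟩

theorem integral_contDiffBump_mul_pos {ξ₀ : ℝ} (χ : ContDiffBump ξ₀) (hχ : (0 : ℝ) ∉ tsupport χ)
    {w : ℝ → ℝ} (hw : ContinuousOn w {0}ᶜ) (hw_nonneg : ∀ ξ, 0 ≤ w ξ) (hwξ₀ : w ξ₀ ≠ 0) :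
    0 < ∫ ξ, χ ξ * w ξ := by
  have hcont : Continuous fun ξ => χ ξ * w ξ :=
    (χ.continuous.continuousOn.mul hw).continuous_of_tsupport_subset isOpen_compl_singleton
      (tsupport_mul_subset_left.trans fun ξ hξ (h : ξ = 0) => hχ (h ▸ hξ))
  refine hcont.integral_pos_of_hasCompactSupport_nonneg_nonzero (x := ξ₀)
    χ.hasCompactSupport.mul_right (fun ξ => mul_nonneg χ.nonneg (hw_nonneg ξ)) ?_
  simpa [χ.one_of_mem_closedBall (mem_closedBall_self χ.rIn_pos.le)] using hwξ₀

theorem biasFourier_eq_fourier (φ : ℝ → ℂ) (ω : ℝ) :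
    biasFourier φ ω = 𝓕 φ (ω / (2 * Real.pi)) := by
  rw [Real.fourier_real_eq_integral_exp_smul]
  unfold biasFourier
  congr 1
  ext b
  rw [smul_eq_mul, mul_comm]
  congr 2
  push_cast
  field_simp

theorem biasFourier_smul (a : ℂ) (φ : ℝ → ℂ) : biasFourier (a • φ) = a • biasFourier φ := by
  ext ω
  simp only [biasFourier, Pi.smul_apply, smul_eq_mul, mul_assoc, integral_const_mul]

theorem zero_notMem_tsupport_biasFourier {φ : ℝ → ℂ} (h : (0 : ℝ) ∉ tsupport (𝓕 φ)) :
    (0 : ℝ) ∉ tsupport (biasFourier φ) := by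
  have hcomp : biasFourier φ = 𝓕 φ ∘ (· / (2 * Real.pi)) := funext (biasFourier_eq_fourier φ)
  rw [hcomp]
  intro h0
  exact h (by simpa using tsupport_comp_subset_preimage (𝓕 φ) (continuous_id.div_const _) h0)

/-- The admissibility integral `⟪σ, ρ⟫` without its constant factor `(2π)^(m-1)`. -/
noncomputable def ridgeletPairing (m : ℕ) (σ ρ : ℝ → ℂ) : ℂ :=
  ∫ ω : ℝ, biasFourier σ ω * starRingEnd ℂ (biasFourier ρ ω) * ((|ω| ^ (-(m : ℤ)) : ℝ) : ℂ)

theorem ridgeletPairing_smul_right (m : ℕ) (σ ρ : ℝ → ℂ) (a : ℂ) :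
    ridgeletPairing m σ (a • ρ) = starRingEnd ℂ a * ridgeletPairing m σ ρ := by
  rw [ridgeletPairing, ridgeletPairing, ← integral_const_mul]
  congr 1
  ext ω
  rw [biasFourier_smul, Pi.smul_apply, smul_eq_mul, map_mul]
  ring

theorem ridgeletPairing_eq_integral_fourier (m : ℕ) (σ ρ : ℝ → ℂ) :
    ridgeletPairing m σ ρ = (2 * Real.pi : ℂ) * ∫ ξ : ℝ,
      𝓕 σ ξ * starRingEnd ℂ (𝓕 ρ ξ) * ((|2 * Real.pi * ξ| ^ (-(m : ℤ)) : ℝ) : ℂ) := by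
  have h2π : (0 : ℝ) < 2 * Real.pi := by positivity
  have hω (ω : ℝ) : ω = 2 * Real.pi * (ω / (2 * Real.pi)) := by field_simp
  simp_rw [ridgeletPairing, biasFourier_eq_fourier]
  conv_lhs => enter [2, ω, 2, 1, 1, 1]; rw [hω ω]
  rw [Measure.integral_comp_div (fun ξ => 𝓕 σ ξ * starRingEnd ℂ (𝓕 ρ ξ) *
    ((|2 * Real.pi * ξ| ^ (-(m : ℤ)) : ℝ) : ℂ)), abs_of_pos h2π, Complex.real_smul]
  push_cast
  rfl

theorem ridgeletPairing_eq_of_fourier_eq_smul (m : ℕ) {σ ρ : ℝ → ℂ} {χ : ℝ → ℝ}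
    (hρ : 𝓕 ρ = fun ξ => χ ξ • 𝓕 σ ξ) :
    ridgeletPairing m σ ρ = (2 * Real.pi : ℂ) *
      ((∫ ξ, χ ξ * (‖𝓕 σ ξ‖ ^ 2 * |2 * Real.pi * ξ| ^ (-(m : ℤ))) : ℝ) : ℂ) := by
  have hintegrand (ξ : ℝ) : 𝓕 σ ξ * starRingEnd ℂ (χ ξ • 𝓕 σ ξ) *
      ((|2 * Real.pi * ξ| ^ (-(m : ℤ)) : ℝ) : ℂ) =
        ((χ ξ * (‖𝓕 σ ξ‖ ^ 2 * |2 * Real.pi * ξ| ^ (-(m : ℤ))) : ℝ) : ℂ) := by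
    rw [Complex.real_smul, map_mul, Complex.conj_ofReal]
    push_cast
    rw [← Complex.mul_conj']
    ring
  rw [ridgeletPairing_eq_integral_fourier, hρ, integral_congr_ae (.of_forall hintegrand),
    integral_complex_ofReal]

theorem exists_ridgeletPairing_ne_zero (m : ℕ) {σ : SchwartzMap ℝ ℂ} (hσ : σ ≠ 0) :
    ∃ ρ : SchwartzMap ℝ ℂ, (0 : ℝ) ∉ tsupport (biasFourier ρ) ∧ ridgeletPairing m σ ρ ≠ 0 := by
  have hFσ : 𝓕 σ ≠ 0 := fun h => hσ (by simpa using congrArg 𝓕⁻ h)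
  obtain ⟨ξ₀, hξ₀, hσξ₀⟩ := (𝓕 σ).continuous.exists_ne_and_apply_ne_zero
    (fun h => hFσ (DFunLike.ext' h)) 0
  let χ : ContDiffBump ξ₀ := ⟨|ξ₀| / 4, |ξ₀| / 2, by positivity, by linarith [abs_pos.mpr hξ₀]⟩
  have hχ : (0 : ℝ) ∉ tsupport χ := by
    rw [χ.tsupport_eq, mem_closedBall, dist_comm, dist_zero_right, Real.norm_eq_abs]
    change ¬|ξ₀| ≤ |ξ₀| / 2
    linarith [abs_pos.mpr hξ₀]
  let g : SchwartzMap ℝ ℂ := (χ.hasCompactSupport.smul_right (f' := 𝓕 (σ : ℝ → ℂ))).toSchwartzMap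
    (χ.contDiff.smul ((𝓕 σ).smooth ⊤))
  have hg : 𝓕 ((𝓕⁻ g : SchwartzMap ℝ ℂ) : ℝ → ℂ) = fun ξ => χ ξ • 𝓕 (σ : ℝ → ℂ) ξ := by
    rw [← SchwartzMap.fourier_coe, FourierTransform.fourier_fourierInv_eq]
    rfl
  refine ⟨𝓕⁻ g, zero_notMem_tsupport_biasFourier ?_, ?_⟩
  · rw [hg]
    exact fun h => hχ (tsupport_smul_subset_left _ _ h)
  have hw : ContinuousOn (fun ξ => ‖𝓕 (σ : ℝ → ℂ) ξ‖ ^ 2 * |2 * Real.pi * ξ| ^ (-(m : ℤ))) {0}ᶜ :=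
    ((𝓕 σ).continuous.norm.pow 2).continuousOn.mul (ContinuousOn.zpow₀ (by fun_prop) _
      fun ξ (hξ : ξ ≠ 0) => Or.inl (abs_ne_zero.mpr (mul_ne_zero (by positivity) hξ)))
  have hwξ₀ : ‖𝓕 (σ : ℝ → ℂ) ξ₀‖ ^ 2 * |2 * Real.pi * ξ₀| ^ (-(m : ℤ)) ≠ 0 :=
    mul_ne_zero (pow_ne_zero _ (norm_ne_zero_iff.mpr hσξ₀))
      (zpow_ne_zero _ (abs_ne_zero.mpr (mul_ne_zero (by positivity) hξ₀)))
  rw [ridgeletPairing_eq_of_fourier_eq_smul m hg]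
  exact mul_ne_zero (by exact_mod_cast Real.two_pi_pos.ne') (ofReal_ne_zero.mpr
    (integral_contDiffBump_mul_pos χ hχ hw (fun ξ => by positivity) hwξ₀).ne')

theorem exists_admissible_ridgelet_function_general (m : ℕ)
    (σ : SchwartzMap ℝ ℂ) (hσ : σ ≠ 0) :
    ∃ ρ : SchwartzMap ℝ ℂ,
      (0 : ℝ) ∉ tsupport (biasFourier ρ) ∧
      (((2 * Real.pi) ^ (m - 1) : ℝ) : ℂ)
          * (∫ ω : ℝ, biasFourier σ ω * starRingEnd ℂ (biasFourier ρ ω)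
              * ((|ω| ^ (-(m : ℤ)) : ℝ) : ℂ)) = 1 := by
  obtain ⟨ρ, hρ₀, hρ⟩ := exists_ridgeletPairing_ne_zero m hσ
  set K : ℂ := (((2 * Real.pi) ^ (m - 1) : ℝ) : ℂ)
  have hK : K ≠ 0 := ofReal_ne_zero.mpr (pow_ne_zero _ Real.two_pi_pos.ne')
  set a : ℂ := starRingEnd ℂ (K * ridgeletPairing m σ ρ)⁻¹
  refine ⟨a • ρ, ?_, ?_⟩
  · rw [FunLike.coe_smul, biasFourier_smul]
    exact fun h => hρ₀ (tsupport_smul_subset_right (fun _ => a) _ h)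
  · change K * ridgeletPairing m σ ⇑(a • ρ) = 1
    rw [FunLike.coe_smul, ridgeletPairing_smul_right, Complex.conj_conj]
    field_simp

theorem exists_admissible_ridgelet_function (m : ℕ) (hm : 1 ≤ m)
    (σ : SchwartzMap ℝ ℂ) (hσ : σ ≠ 0) :
    ∃ ρ : SchwartzMap ℝ ℂ,
      (0 : ℝ) ∉ tsupport (biasFourier ρ) ∧
      (((2 * Real.pi) ^ (m - 1) : ℝ) : ℂ)
          * (∫ ω : ℝ, biasFourier σ ω * starRingEnd ℂ (biasFourier ρ ω)
              * ((|ω| ^ (-(m : ℤ)) : ℝ) : ℂ)) = 1 :=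
  exists_admissible_ridgelet_function_general m σ hσ
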